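/- Let x0 ∈ [−√3/4, 0) and let G₂(x) = g₂(x)/h(x) for x ∈ [2x0, 0], where g₂(x) = 4(2x − x0) g(x)^{3/2}, h(x) = ((x − x0)^2 + (4/9) g(x)^4)^{1/2} and g(x) = (9x(2x0 − x)/4)^{1/3}. Then C₉(x0) ≤ G₂(x) ≤ C₁₀(x0) for every x ∈ [2x0, 0], where C₉(x0) = −2^{−19/6} · 3^{2/3} · (√33 + 3)(15 + √33)^{1/2} |x0|^{2/3} and C₁₀(x0) = 2^{−11/6} · 3 · (√33 − 3)(15 − √33)^{1/2} |x0| / (2^{4/3} + 9 |x0|^{2/3})^{1/2}. Moreover g₂ attains its minimum over [2x0, 0] at x₁ = ((7 + √33)/8) x0 and its maximum at x₂ = ((7 − √33)/8) x0. -/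

import Mathlib

/-!
With `p = x(2x0 - x) = x0² - (x - x0)²` one has `g³ = 9p/4`, hence `g₂ = 6(2x - x0)√p` and
`h² = x0² - (4/9)(g³ - g⁴)`. The extreme values of `g₂` come from polynomial inequalities in `x`
and `√p`. Since `s ↦ s³ - s⁴` increases on `s ≤ 3/4`, and `g³ ≤ 9x0²/4 ≤ (3/4)³` exactly when
`x0² ≤ 3/16`, the function `h` grows with `|x - x0|`. So `h ≥ h(x0)` on the whole interval and
`h ≥ h(x0/2)` where `g₂ > 0`, which gives `C₉ = g₂(x₁)/h(x0)` and `C₁₀ = g₂(x₂)/h(x0/2)`.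
-/

open Set

lemma rpow_eq_zpow_of_pow_eq {b y r : ℝ} {n : ℕ} {k : ℤ} (hr : 0 ≤ r) (hb : r ^ n = b)
    (hy : n * y = k) : b ^ y = r ^ k := by
  rw [← hb, ← Real.rpow_natCast_mul hr, hy, Real.rpow_intCast]

lemma exists_pos_pow_eq {b : ℝ} (hb : 0 < b) {n : ℕ} (hn : n ≠ 0) : ∃ r : ℝ, 0 < r ∧ r ^ n = b :=
  ⟨_, Real.rpow_pos_of_pos hb _, Real.rpow_inv_natCast_pow hb.le hn⟩

lemma cube_sub_pow_four_le_of_le {s t : ℝ} (hst : s ≤ t) (ht : t ≤ 3 / 4) :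
    s ^ 3 - s ^ 4 ≤ t ^ 3 - t ^ 4 := by
  have hquartic : 0 ≤ t ^ 4 - 4 * t * s ^ 3 + 3 * s ^ 4 := by
    nlinarith [mul_nonneg (sq_nonneg (t - s)) (sq_nonneg (t + s)),
      mul_nonneg (sq_nonneg (t - s)) (sq_nonneg s)]
  have hcube : s ^ 3 ≤ t ^ 3 := (Odd.pow_le_pow (by decide)).2 hst
  nlinarith [mul_nonneg (by linarith : (0:ℝ) ≤ 3 / 4 - t) (sub_nonneg.2 hcube)]

lemma neg_le_two_mul_sub_mul_of_sq_eq {x0 x W : ℝ} (hW2 : W ^ 2 = x * (2 * x0 - x)) :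
    -((√33 + 3) * √(30 + 2 * √33) * x0 ^ 2) ≤ 32 * (2 * x - x0) * W := by
  set r := √33
  set q := √(30 + 2 * r)
  have hr : r ^ 2 = 33 := Real.sq_sqrt (by norm_num)
  have hr5 : 5 ≤ r := Real.le_sqrt_of_sq_le (by norm_num)
  have hq : q ^ 2 = 30 + 2 * r := Real.sq_sqrt (by positivity)
  -- the gap between the squares has a double root at the minimiser `x = (7 + √33) x0 / 8`
  have hsq : (32 * (2 * x - x0) * W) ^ 2 ≤ ((r + 3) * q * x0 ^ 2) ^ 2 := by
    have hgap : ((r + 3) * q * x0 ^ 2) ^ 2 - (32 * (2 * x - x0) * W) ^ 2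
        = (8 * x - (7 + r) * x0) ^ 2 * (8 * x - (5 - r) * x0) ^ 2
          + (4 * r - 4) * ((8 * x - (7 + r) * x0) ^ 2 * x0 ^ 2) := by
      linear_combination
        (128 * x0 ^ 2 * (x - x0) ^ 2 + 128 * x0 ^ 3 * (x - x0) + (23 - 6 * r - r ^ 2) * x0 ^ 4) * hr
        + (9 + 6 * r + r ^ 2) * x0 ^ 4 * hq - 1024 * (2 * x - x0) ^ 2 * hW2
    nlinarith [mul_nonneg (by linarith : (0 : ℝ) ≤ 4 * r - 4)
      (mul_nonneg (sq_nonneg (8 * x - (7 + r) * x0)) (sq_nonneg x0))]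
  exact (abs_le_of_sq_le_sq' hsq (by positivity)).1

lemma two_mul_sub_mul_le_of_sq_eq {x0 x W : ℝ} (hx0 : x0 ≤ 0) (hW : 0 ≤ W)
    (hW2 : W ^ 2 = x * (2 * x0 - x)) :
    32 * (2 * x - x0) * W ≤ (√33 - 3) * √(30 - 2 * √33) * x0 ^ 2 := by
  set r := √33
  set q := √(30 - 2 * r)
  have hr : r ^ 2 = 33 := Real.sq_sqrt (by norm_num)
  have hr5 : 5 ≤ r := Real.le_sqrt_of_sq_le (by norm_num)
  have hr6 : r ≤ 6 := Real.sqrt_le_iff.2 ⟨by norm_num, by norm_num⟩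
  have hq : q ^ 2 = 30 - 2 * r := Real.sq_sqrt (by linarith)
  have hbound : 0 ≤ (r - 3) * q * x0 ^ 2 :=
    mul_nonneg (mul_nonneg (by linarith) (by positivity)) (sq_nonneg x0)
  rcases le_or_gt (2 * x - x0) 0 with hneg | hpos
  · nlinarith [mul_nonpos_of_nonpos_of_nonneg hneg hW]
  -- the gap between the squares has a double root at the maximiser `x = (7 - √33) x0 / 8`
  have hsq : (32 * (2 * x - x0) * W) ^ 2 ≤ ((r - 3) * q * x0 ^ 2) ^ 2 := by
    have hgap : ((r - 3) * q * x0 ^ 2) ^ 2 - (32 * (2 * x - x0) * W) ^ 2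
        = (8 * x - (7 - r) * x0) ^ 2 * (16 * (2 * x - x0) ^ 2
          - (8 + 8 * r) * ((2 * x - x0) * x0) + (30 - 2 * r) * x0 ^ 2) := by
      linear_combination
        (192 * x0 ^ 2 * (x - x0) ^ 2 + 144 * x0 ^ 3 * (x - x0) + 16 * r * x0 ^ 3 * (x - x0)
          + (24 + 8 * r) * x0 ^ 4) * hr
        + (9 - 6 * r + r ^ 2) * x0 ^ 4 * hq - 1024 * (2 * x - x0) ^ 2 * hW2
    have hfactor : 0 ≤ 16 * (2 * x - x0) ^ 2 - (8 + 8 * r) * ((2 * x - x0) * x0)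
        + (30 - 2 * r) * x0 ^ 2 := by
      nlinarith [mul_nonpos_of_nonneg_of_nonpos hpos.le hx0, sq_nonneg x0, sq_nonneg (2 * x - x0)]
    nlinarith [mul_nonneg (sq_nonneg (8 * x - (7 - r) * x0)) hfactor]
  exact (abs_le_of_sq_le_sq' hsq hbound).2

namespace Tricomi

noncomputable def g (x0 x : ℝ) : ℝ := (9 * x * (2 * x0 - x) / 4) ^ ((1 : ℝ) / 3)

noncomputable def h (x0 x : ℝ) : ℝ := ((x - x0) ^ 2 + (4 / 9) * g x0 x ^ 4) ^ ((1 : ℝ) / 2)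

noncomputable def g₂ (x0 x : ℝ) : ℝ := 4 * (2 * x - x0) * g x0 x ^ ((3 : ℝ) / 2)

variable {x0 x y : ℝ}

lemma mul_two_mul_sub_nonneg (hx : x ∈ Icc (2 * x0) 0) : 0 ≤ x * (2 * x0 - x) :=
  mul_nonneg_of_nonpos_of_nonpos hx.2 (by linarith [hx.1])

lemma self_mem_Icc (hx0 : x0 ≤ 0) : x0 ∈ Icc (2 * x0) 0 := ⟨by linarith, hx0⟩

lemma g_nonneg (hx : x ∈ Icc (2 * x0) 0) : 0 ≤ g x0 x :=
  Real.rpow_nonneg (by linarith [mul_two_mul_sub_nonneg hx]) _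

lemma g_pow_three (hx : x ∈ Icc (2 * x0) 0) :
    g x0 x ^ 3 = 9 * x * (2 * x0 - x) / 4 := by
  have hp : 0 ≤ 9 * x * (2 * x0 - x) / 4 := by linarith [mul_two_mul_sub_nonneg hx]
  rw [g, ← Real.rpow_natCast, ← Real.rpow_mul hp]
  norm_num

lemma h_eq (hx : x ∈ Icc (2 * x0) 0) :
    h x0 x = √(x0 ^ 2 - 4 / 9 * (g x0 x ^ 3 - g x0 x ^ 4)) := by
  rw [h, ← Real.sqrt_eq_rpow]
  congr 1
  linear_combination 4 / 9 * g_pow_three hx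

lemma g_le (hsmall : x0 ^ 2 ≤ 3 / 16) (hx : x ∈ Icc (2 * x0) 0) :
    g x0 x ≤ 3 / 4 := by
  refine (pow_le_pow_iff_left₀ (g_nonneg hx) (by norm_num) three_ne_zero).1 ?_
  rw [g_pow_three hx]
  nlinarith [sq_nonneg (x - x0)]

lemma h_le_h_of_abs_sub_le (hsmall : x0 ^ 2 ≤ 3 / 16) (hx : x ∈ Icc (2 * x0) 0)
    (hy : y ∈ Icc (2 * x0) 0) (hxy : |x - x0| ≤ |y - x0|) : h x0 x ≤ h x0 y := by
  have hp : y * (2 * x0 - y) ≤ x * (2 * x0 - x) := by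
    nlinarith [sq_le_sq.2 hxy]
  have hg : g x0 y ≤ g x0 x :=
    Real.rpow_le_rpow (by linarith [mul_two_mul_sub_nonneg hy]) (by linarith) (by norm_num)
  rw [h_eq hx, h_eq hy]
  refine Real.sqrt_le_sqrt ?_
  linarith [cube_sub_pow_four_le_of_le hg (g_le hsmall hx)]

lemma g₂_eq (hx : x ∈ Icc (2 * x0) 0) :
    g₂ x0 x = 6 * (2 * x - x0) * √(x * (2 * x0 - x)) := by
  have hp := mul_two_mul_sub_nonneg hx
  rw [g₂, g, ← Real.rpow_mul (by linarith), show (1 : ℝ) / 3 * (3 / 2) = 1 / 2 by norm_num,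
    ← Real.sqrt_eq_rpow, show 9 * x * (2 * x0 - x) / 4 = (3 / 2) ^ 2 * (x * (2 * x0 - x)) by ring,
    Real.sqrt_mul (by positivity), Real.sqrt_sq (by norm_num)]
  ring

lemma g₂_critical_point {r : ℝ} (hx0 : x0 ≤ 0) (hr : r ^ 2 = 33) :
    g₂ x0 ((7 + r) / 8 * x0) = -(3 / 16 * ((r + 3) * √(30 + 2 * r) * x0 ^ 2)) := by
  have hr6 : -6 ≤ r ∧ r ≤ 6 := ⟨by nlinarith, by nlinarith⟩
  have hq : √(30 + 2 * r) ^ 2 = 30 + 2 * r := Real.sq_sqrt (by linarith)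
  have hmem : (7 + r) / 8 * x0 ∈ Icc (2 * x0) 0 := ⟨by nlinarith, by nlinarith⟩
  have hp : (7 + r) / 8 * x0 * (2 * x0 - (7 + r) / 8 * x0) = (√(30 + 2 * r) * x0 / 8) ^ 2 := by
    linear_combination -(x0 ^ 2 / 64) * hq - x0 ^ 2 / 64 * hr
  rw [g₂_eq hmem, hp, Real.sqrt_sq_eq_abs,
    abs_of_nonpos (by nlinarith [Real.sqrt_nonneg (30 + 2 * r)])]
  ring

lemma g₂_min_point (hx0 : x0 ≤ 0) :
    g₂ x0 ((7 + √33) / 8 * x0) = -(3 / 16 * ((√33 + 3) * √(30 + 2 * √33) * x0 ^ 2)) :=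
  g₂_critical_point hx0 (Real.sq_sqrt (by norm_num))

lemma g₂_max_point (hx0 : x0 ≤ 0) :
    g₂ x0 ((7 - √33) / 8 * x0) = 3 / 16 * ((√33 - 3) * √(30 - 2 * √33) * x0 ^ 2) := by
  have := g₂_critical_point hx0 (r := -√33) (by rw [neg_sq, Real.sq_sqrt (by norm_num)])
  rw [← sub_eq_add_neg] at this
  rw [this]
  ring_nf

lemma g₂_min_point_le (hx0 : x0 ≤ 0) (hx : x ∈ Icc (2 * x0) 0) :
    g₂ x0 ((7 + √33) / 8 * x0) ≤ g₂ x0 x := by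
  have := neg_le_two_mul_sub_mul_of_sq_eq (Real.sq_sqrt (mul_two_mul_sub_nonneg hx))
  rw [g₂_min_point hx0, g₂_eq hx]
  linarith

lemma g₂_le_max_point (hx0 : x0 ≤ 0) (hx : x ∈ Icc (2 * x0) 0) :
    g₂ x0 x ≤ g₂ x0 ((7 - √33) / 8 * x0) := by
  have := two_mul_sub_mul_le_of_sq_eq hx0 (Real.sqrt_nonneg _)
    (Real.sq_sqrt (mul_two_mul_sub_nonneg hx))
  rw [g₂_max_point hx0, g₂_eq hx]
  linarith

lemma h_nonneg : 0 ≤ h x0 x := Real.rpow_nonneg (by positivity) _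

lemma h_self : h x0 x0 = 2 / 3 * g x0 x0 ^ 2 := by
  rw [h, sub_self, ← Real.sqrt_eq_rpow,
    show (0 : ℝ) ^ 2 + 4 / 9 * g x0 x0 ^ 4 = (2 / 3 * g x0 x0 ^ 2) ^ 2 by ring,
    Real.sqrt_sq (by positivity)]

lemma h_self_pos (hx0 : x0 ≠ 0) : 0 < h x0 x0 := by
  rw [h_self, g]
  have : 0 < 9 * x0 * (2 * x0 - x0) / 4 := by nlinarith [sq_pos_of_ne_zero hx0]
  positivity

lemma g₂_min_point_div_h_self_le (hsmall : x0 ^ 2 ≤ 3 / 16) (hx0 : x0 < 0)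
    (hx : x ∈ Icc (2 * x0) 0) :
    g₂ x0 ((7 + √33) / 8 * x0) / h x0 x0 ≤ g₂ x0 x / h x0 x := by
  have hmin : 0 ≤ -g₂ x0 ((7 + √33) / 8 * x0) := by
    rw [g₂_min_point hx0.le, neg_neg]
    positivity
  have hh := h_le_h_of_abs_sub_le hsmall (self_mem_Icc hx0.le) hx (by simp)
  calc g₂ x0 ((7 + √33) / 8 * x0) / h x0 x0
      ≤ g₂ x0 ((7 + √33) / 8 * x0) / h x0 x := by
        simpa only [neg_div, neg_le_neg_iff] using
          div_le_div_of_nonneg_left hmin (h_self_pos hx0.ne) hh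
    _ ≤ g₂ x0 x / h x0 x :=
        div_le_div_of_nonneg_right (g₂_min_point_le hx0.le hx) h_nonneg

lemma div_h_le_g₂_max_point_div (hsmall : x0 ^ 2 ≤ 3 / 16) (hx0 : x0 < 0)
    (hx : x ∈ Icc (2 * x0) 0) :
    g₂ x0 x / h x0 x ≤ g₂ x0 ((7 - √33) / 8 * x0) / h x0 (x0 / 2) := by
  have hmax : 0 ≤ g₂ x0 ((7 - √33) / 8 * x0) := by
    have : 0 ≤ √33 - 3 := sub_nonneg.2 (Real.le_sqrt_of_sq_le (by norm_num))
    rw [g₂_max_point hx0.le]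
    positivity
  have hhalf : x0 / 2 ∈ Icc (2 * x0) 0 := ⟨by linarith, by linarith⟩
  have hpos : 0 < h x0 (x0 / 2) := (h_self_pos hx0.ne).trans_le
    (h_le_h_of_abs_sub_le hsmall (self_mem_Icc hx0.le) hhalf (by simp))
  rcases le_or_gt (2 * x - x0) 0 with hneg | hpos'
  · have : g₂ x0 x ≤ 0 := by
      rw [g₂_eq hx]
      exact mul_nonpos_of_nonpos_of_nonneg (by linarith) (Real.sqrt_nonneg _)
    exact (div_nonpos_of_nonpos_of_nonneg this h_nonneg).trans (by positivity)
  · have hh : h x0 (x0 / 2) ≤ h x0 x := by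
      refine h_le_h_of_abs_sub_le hsmall hhalf hx ?_
      rw [abs_of_pos (by linarith), abs_of_pos (by linarith)]
      linarith
    calc g₂ x0 x / h x0 x
        ≤ g₂ x0 ((7 - √33) / 8 * x0) / h x0 x :=
          div_le_div_of_nonneg_right (g₂_le_max_point hx0.le hx) h_nonneg
      _ ≤ g₂ x0 ((7 - √33) / 8 * x0) / h x0 (x0 / 2) :=
          div_le_div_of_nonneg_left hmax hpos hh

lemma g₂_min_point_div_h_self (hx0 : x0 < 0) :
    g₂ x0 ((7 + √33) / 8 * x0) / h x0 x0 =
      -(2 : ℝ) ^ (-(19 : ℝ) / 6) * 3 ^ ((2 : ℝ) / 3) * (√33 + 3) *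
        (15 + √33) ^ ((1 : ℝ) / 2) * |x0| ^ ((2 : ℝ) / 3) := by
  obtain ⟨e, he, he6⟩ := exists_pos_pow_eq two_pos (n := 6) (by norm_num)
  obtain ⟨c, hc, hc3⟩ := exists_pos_pow_eq three_pos (n := 3) (by norm_num)
  obtain ⟨t, ht, ht3⟩ := exists_pos_pow_eq (abs_pos.2 hx0.ne) (n := 3) (by norm_num)
  have hx0t : x0 ^ 2 = t ^ 6 := by rw [← sq_abs, ← ht3]; ring
  have hq : √(30 + 2 * √33) = e ^ 3 * √(15 + √33) := by
    rw [show 30 + 2 * √33 = (e ^ 3) ^ 2 * (15 + √33) by linear_combination -(15 + √33) * he6,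
      Real.sqrt_mul (by positivity), Real.sqrt_sq (by positivity)]
  have hγ : g x0 x0 = c ^ 2 * t ^ 2 / e ^ 4 := by
    have hcube : (c ^ 2 * t ^ 2 / e ^ 4) ^ 3 = 9 * x0 * (2 * x0 - x0) / 4 := by
      field_simp
      linear_combination 4 * t ^ 6 * (c ^ 3 + 3) * hc3 - 9 * x0 ^ 2 * (e ^ 6 + 2) * he6 - 36 * hx0t
    rw [g, rpow_eq_zpow_of_pow_eq (k := 1) (by positivity) hcube (by norm_num), zpow_one]
  rw [g₂_min_point hx0.le, h_self, hγ, hq,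
    rpow_eq_zpow_of_pow_eq (k := -19) he.le he6 (by norm_num),
    rpow_eq_zpow_of_pow_eq (k := 2) hc.le hc3 (by norm_num),
    rpow_eq_zpow_of_pow_eq (k := 2) ht.le ht3 (by norm_num), ← Real.sqrt_eq_rpow, hx0t]
  field_simp
  linear_combination -9 * (e ^ 24 + 2 * e ^ 18 + 4 * e ^ 12 + 8 * e ^ 6 + 16) * he6
    + 32 * (c ^ 3 + 3) * hc3

lemma g₂_max_point_div_h_half (hx0 : x0 < 0) :
    g₂ x0 ((7 - √33) / 8 * x0) / h x0 (x0 / 2) =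
      (2 : ℝ) ^ (-(11 : ℝ) / 6) * 3 * (√33 - 3) * (15 - √33) ^ ((1 : ℝ) / 2) * |x0| /
        (2 ^ ((4 : ℝ) / 3) + 9 * |x0| ^ ((2 : ℝ) / 3)) ^ ((1 : ℝ) / 2) := by
  obtain ⟨e, he, he6⟩ := exists_pos_pow_eq two_pos (n := 6) (by norm_num)
  obtain ⟨t, ht, ht3⟩ := exists_pos_pow_eq (abs_pos.2 hx0.ne) (n := 3) (by norm_num)
  have hx0t : x0 ^ 2 = t ^ 6 := by rw [← sq_abs, ← ht3]; ring
  have he12 : e ^ 12 = 4 := by linear_combination (e ^ 6 + 2) * he6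
  have hr6 : √33 ≤ 6 := Real.sqrt_le_iff.2 ⟨by norm_num, by norm_num⟩
  have hq : √(30 - 2 * √33) = e ^ 3 * √(15 - √33) := by
    rw [show 30 - 2 * √33 = (e ^ 3) ^ 2 * (15 - √33) by linear_combination -(15 - √33) * he6,
      Real.sqrt_mul (by positivity), Real.sqrt_sq (by positivity)]
  have hγ : g x0 (x0 / 2) = 3 * t ^ 2 / e ^ 8 := by
    have hcube : (3 * t ^ 2 / e ^ 8) ^ 3 = 9 * (x0 / 2) * (2 * x0 - x0 / 2) / 4 := by
      field_simp
      linear_combination -27 * (e ^ 12 + 4) * x0 ^ 2 * he12 - 432 * hx0t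
    rw [g, rpow_eq_zpow_of_pow_eq (k := 1) (by positivity) hcube (by norm_num), zpow_one]
  have hh : h x0 (x0 / 2) = t ^ 3 / e ^ 10 * √(e ^ 8 + 9 * t ^ 2) := by
    rw [h, hγ, ← Real.sqrt_eq_rpow, ← Real.sqrt_sq (by positivity : 0 ≤ t ^ 3 / e ^ 10),
      ← Real.sqrt_mul (by positivity)]
    congr 1
    field_simp
    linear_combination (9 * t ^ 6 * e ^ 20 - 324 * t ^ 8) * he12 + 9 * e ^ 32 * hx0t
  rw [g₂_max_point hx0.le, hh, hq,
    rpow_eq_zpow_of_pow_eq (k := -11) he.le he6 (by norm_num),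
    rpow_eq_zpow_of_pow_eq (k := 8) he.le he6 (by norm_num),
    rpow_eq_zpow_of_pow_eq (k := 2) ht.le ht3 (by norm_num), ← Real.sqrt_eq_rpow,
    ← Real.sqrt_eq_rpow, ← ht3, hx0t]
  field_simp
  linear_combination (√33 - 3) * √(15 - √33) * (e ^ 12 + 4) * he12

end Tricomi

/-- Corollary 4.8 i: for `x0 ∈ [-√3/4, 0)` the function
`G₂ = g₂/h`, with `g₂(x) = 4(2x - x0) g(x)^(3/2)`, satisfies
`C₉(x0) ≤ G₂(x) ≤ C₁₀(x0)` on `[2x0, 0]`; moreover `g₂` attains its minimum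
at `x₁ = ((7 + √33)/8) x0` and its maximum at `x₂ = ((7 - √33)/8) x0`. -/
theorem G2_bounds_small_x0
    (x0 : ℝ) (hx0l : -Real.sqrt 3 / 4 ≤ x0) (hx0 : x0 < 0)
    (g h g2 G2 : ℝ → ℝ)
    (hg : ∀ x : ℝ, g x = (9 * x * (2 * x0 - x) / 4) ^ ((1 : ℝ) / 3))
    (hh : ∀ x : ℝ, h x = ((x - x0) ^ 2 + (4 / 9) * (g x) ^ 4) ^ ((1 : ℝ) / 2))
    (hg2 : ∀ x : ℝ, g2 x = 4 * (2 * x - x0) * (g x) ^ ((3 : ℝ) / 2))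
    (hG2 : ∀ x : ℝ, G2 x = g2 x / h x)
    (x1 x2 : ℝ)
    (hx1 : x1 = (7 + Real.sqrt 33) / 8 * x0)
    (hx2 : x2 = (7 - Real.sqrt 33) / 8 * x0) :
    (∀ x ∈ Icc (2 * x0) 0, g2 x1 ≤ g2 x ∧ g2 x ≤ g2 x2) ∧
    ∀ x ∈ Icc (2 * x0) 0,
      -(2 : ℝ) ^ (-(19 : ℝ) / 6) * 3 ^ ((2 : ℝ) / 3) * (Real.sqrt 33 + 3) *
          (15 + Real.sqrt 33) ^ ((1 : ℝ) / 2) * |x0| ^ ((2 : ℝ) / 3) ≤ G2 x ∧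
      G2 x ≤ (2 : ℝ) ^ (-(11 : ℝ) / 6) * 3 * (Real.sqrt 33 - 3) *
          (15 - Real.sqrt 33) ^ ((1 : ℝ) / 2) * |x0| /
          (2 ^ ((4 : ℝ) / 3) + 9 * |x0| ^ ((2 : ℝ) / 3)) ^ ((1 : ℝ) / 2) := by
  obtain rfl : g = Tricomi.g x0 := funext hg
  obtain rfl : h = Tricomi.h x0 := funext hh
  obtain rfl : g2 = Tricomi.g₂ x0 := funext hg2
  subst hx1 hx2
  have hsmall : x0 ^ 2 ≤ 3 / 16 := by
    nlinarith [Real.sq_sqrt (show (0 : ℝ) ≤ 3 by norm_num), Real.sqrt_nonneg 3]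
  refine ⟨fun x hx => ⟨Tricomi.g₂_min_point_le hx0.le hx, Tricomi.g₂_le_max_point hx0.le hx⟩,
    fun x hx => ?_⟩
  rw [hG2, ← Tricomi.g₂_min_point_div_h_self hx0, ← Tricomi.g₂_max_point_div_h_half hx0]
  exact ⟨Tricomi.g₂_min_point_div_h_self_le hsmall hx0 hx,
    Tricomi.div_h_le_g₂_max_point_div hsmall hx0 hx⟩
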